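/- Let L be the clause gadget: a 3-cycle z1 z2 z3, a 14-cycle u1…u14, pendant vertices ℓ4, ℓ7, ℓ10, and edges z1u1, u4ℓ4, u7ℓ7, u10ℓ10. For every 2-edge-coloring c of L whose color-blind partition function c* is a proper vertex coloring of L, at least one of u4, u7, u10 has color-blind partition (2,1). -/

import Mathlib

open Finset

/-- The color-blind partition of `v`: the multiset of (nonzero) counts of incident
edges of each color, i.e. the partition of `deg v` with trailing zeroes removed. -/
def cbp {V : Type*} [Fintype V] [DecidableEq V] (G : SimpleGraph V) [DecidableRel G.Adj]
    {k : ℕ} (c : Sym2 V → Fin k) (v : V) : Multiset ℕ :=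
  (((Finset.univ : Finset (Fin k)).val.map fun i =>
    ((G.neighborFinset v).filter fun w => c s(v, w) = i).card).filter fun m => m ≠ 0)

/-- `c` is a color-blind distinguishing edge-coloring of `G`. -/
def IsCBD {V : Type*} [Fintype V] [DecidableEq V] (G : SimpleGraph V) [DecidableRel G.Adj]
    {k : ℕ} (c : Sym2 V → Fin k) : Prop :=
  ∀ u v : V, G.Adj u v → cbp G c u ≠ cbp G c v

/-- Edges of the clause gadget: vertices 0,1,2 are z1,z2,z3; 3,...,16 are u1,...,u14;
17,18,19 are the pendants ℓ4, ℓ7, ℓ10 (so u4 = 6, u7 = 9, u10 = 12). -/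
def clauseRel (p q : Fin 20) : Prop :=
  (p.val, q.val) ∈ [(0,1),(1,2),(0,2),(0,3),(3,4),(4,5),(5,6),(6,7),(7,8),(8,9),(9,10),
    (10,11),(11,12),(12,13),(13,14),(14,15),(15,16),(16,3),(6,17),(9,18),(12,19)]

instance : DecidableRel clauseRel := fun p q => by unfold clauseRel; infer_instance

/-- The clause gadget `L`. -/
def clauseGadget : SimpleGraph (Fin 20) where
  Adj p q := p ≠ q ∧ (clauseRel p q ∨ clauseRel q p)
  symm := ⟨fun p q h => ⟨h.1.symm, h.2.symm⟩⟩
  loopless := ⟨fun p h => h.1 rfl⟩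

instance : DecidableRel clauseGadget.Adj := fun p q =>
  inferInstanceAs (Decidable (p ≠ q ∧ (clauseRel p q ∨ clauseRel q p)))

/-!
If none of u4, u7, u10 had partition (2,1), each would see a single colour. With two colours,
adjacent degree-2 vertices u, v on a path a - u - v - b get different partitions exactly when
the edges au and vb differ in colour. Going round the 14-cycle from u1u2 to u14u1 the colour
therefore changes an odd number of times, so u1 has partition (2,1); the same argument on the
triangle gives z1 two triangle edges of different colours, so z1 has partition (2,1) too,
although z1 and u1 are adjacent.
-/

section ColorBlindPartition

variable {V : Type*} [Fintype V] [DecidableEq V] {G : SimpleGraph V} [DecidableRel G.Adj]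
  {c : Sym2 V → Fin 2}

lemma cbp_of_neighborFinset_eq_pair {v a b : V} (hab : a ≠ b)
    (h : G.neighborFinset v = {a, b}) :
    cbp G c v = if c s(v, a) = c s(v, b) then {2} else {1, 1} := by
  have huniv : (Finset.univ : Finset (Fin 2)).val = {0, 1} := rfl
  rw [cbp, h, huniv]
  simp only [Finset.filter_insert, Finset.filter_singleton]
  generalize c s(v, a) = x, c s(v, b) = y
  fin_cases x <;> fin_cases y <;> simp [hab, Multiset.filter_singleton]

lemma cbp_of_neighborFinset_eq_triple {v a b d : V} (hab : a ≠ b) (had : a ≠ d) (hbd : b ≠ d)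
    (h : G.neighborFinset v = {a, b, d}) :
    cbp G c v = if c s(v, a) = c s(v, b) ∧ c s(v, b) = c s(v, d) then {3} else {2, 1} := by
  have huniv : (Finset.univ : Finset (Fin 2)).val = {0, 1} := rfl
  rw [cbp, h, huniv]
  simp only [Finset.filter_insert, Finset.filter_singleton]
  generalize c s(v, a) = x, c s(v, b) = y, c s(v, d) = z
  fin_cases x <;> fin_cases y <;> fin_cases z <;>
    simp [hab, had, hbd, Multiset.filter_singleton] <;> decide

lemma cbp_ne_two_one_iff_of_neighborFinset_eq_triple {v a b d : V} (hab : a ≠ b) (had : a ≠ d)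
    (hbd : b ≠ d) (h : G.neighborFinset v = {a, b, d}) :
    cbp G c v ≠ {2, 1} ↔ c s(v, a) = c s(v, b) ∧ c s(v, b) = c s(v, d) := by
  rw [cbp_of_neighborFinset_eq_triple hab had hbd h]
  split_ifs with hmono <;> simp [hmono]

lemma IsCBD.color_ne_of_neighborFinset_eq_pair {u v a b : V} (hc : IsCBD G c) (hav : a ≠ v)
    (hub : u ≠ b) (hu : G.neighborFinset u = {a, v}) (hv : G.neighborFinset v = {u, b}) :
    c s(a, u) ≠ c s(v, b) := by
  intro h
  have hadj : G.Adj u v := by simp [← G.mem_neighborFinset, hu]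
  apply hc u v hadj
  rw [cbp_of_neighborFinset_eq_pair hav hu, cbp_of_neighborFinset_eq_pair hub hv,
    Sym2.eq_swap (a := u), h, Sym2.eq_swap (a := v) (b := u)]
  simp_rw [eq_comm (a := c s(v, b))]

end ColorBlindPartition

namespace clauseGadget

variable {c : Sym2 (Fin 20) → Fin 2}

lemma cycle_edges_at_u1_ne (hc : IsCBD clauseGadget c) (hu₄ : cbp clauseGadget c 6 ≠ {2, 1})
    (hu₇ : cbp clauseGadget c 9 ≠ {2, 1}) (hu₁₀ : cbp clauseGadget c 12 ≠ {2, 1}) :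
    c s(3, 4) ≠ c s(3, 16) := by
  have e₄ := ((cbp_ne_two_one_iff_of_neighborFinset_eq_triple (a := 5) (b := 7) (d := 17)
    (by decide) (by decide) (by decide) (by decide)).1 hu₄).1
  have e₇ := ((cbp_ne_two_one_iff_of_neighborFinset_eq_triple (a := 8) (b := 10) (d := 18)
    (by decide) (by decide) (by decide) (by decide)).1 hu₇).1
  have e₁₀ := ((cbp_ne_two_one_iff_of_neighborFinset_eq_triple (a := 11) (b := 13) (d := 19)
    (by decide) (by decide) (by decide) (by decide)).1 hu₁₀).1
  have e₂₃ := hc.color_ne_of_neighborFinset_eq_pair (u := 4) (v := 5) (a := 3) (b := 6)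
    (by decide) (by decide) (by decide) (by decide)
  have e₅₆ := hc.color_ne_of_neighborFinset_eq_pair (u := 7) (v := 8) (a := 6) (b := 9)
    (by decide) (by decide) (by decide) (by decide)
  have e₈₉ := hc.color_ne_of_neighborFinset_eq_pair (u := 10) (v := 11) (a := 9) (b := 12)
    (by decide) (by decide) (by decide) (by decide)
  have e₁₁₁₂ := hc.color_ne_of_neighborFinset_eq_pair (u := 13) (v := 14) (a := 12) (b := 15)
    (by decide) (by decide) (by decide) (by decide)
  have e₁₃₁₄ := hc.color_ne_of_neighborFinset_eq_pair (u := 15) (v := 16) (a := 14) (b := 3)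
    (by decide) (by decide) (by decide) (by decide)
  simp only [Sym2.eq_swap] at e₄ e₇ e₁₀ e₁₃₁₄ ⊢
  omega

lemma triangle_edges_at_z1_ne (hc : IsCBD clauseGadget c) : c s(0, 1) ≠ c s(0, 2) := by
  have h := hc.color_ne_of_neighborFinset_eq_pair (u := 1) (v := 2) (a := 0) (b := 0)
    (by decide) (by decide) (by decide) (by decide)
  rwa [Sym2.eq_swap (a := 2)] at h

end clauseGadget

theorem clause_gadget_one_true (c : Sym2 (Fin 20) → Fin 2) (hc : IsCBD clauseGadget c) :
    cbp clauseGadget c 6 = {2, 1} ∨ cbp clauseGadget c 9 = {2, 1} ∨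
      cbp clauseGadget c 12 = {2, 1} := by
  by_contra! h
  obtain ⟨hu₄, hu₇, hu₁₀⟩ := h
  have hu₁ : cbp clauseGadget c 3 = {2, 1} := not_not.1 fun h =>
    clauseGadget.cycle_edges_at_u1_ne hc hu₄ hu₇ hu₁₀
      ((cbp_ne_two_one_iff_of_neighborFinset_eq_triple (a := 4) (b := 16) (d := 0)
        (by decide) (by decide) (by decide) (by decide)).1 h).1
  have hz₁ : cbp clauseGadget c 0 = {2, 1} := not_not.1 fun h =>
    clauseGadget.triangle_edges_at_z1_ne hc
      ((cbp_ne_two_one_iff_of_neighborFinset_eq_triple (a := 1) (b := 2) (d := 3)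
        (by decide) (by decide) (by decide) (by decide)).1 h).1
  exact hc 0 3 (by decide) (hz₁.trans hu₁.symm)
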